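/- Lemma 3 (optimal per-epoch structure, time-varying channel): Suppose (r*, l*) is a global minimizer of the time-varying energy E(r, l) = Σ_{n=1}^N ((e^{r_n} − 1)/g_n + ρ) l_n over the set of feasible schedules. Then every epoch n ∈ {1, …, N} uses one of three strategies: (i) l*_n = 0; (ii) r*_n = r_ee(g_n) and 0 < l*_n ≤ L_n; or (iii) r*_n > r_ee(g_n) and l*_n = L_n. Equivalently: for every n with l*_n > 0 one has r*_n ≥ r_ee(g_n), and for every n with l*_n > 0 and r*_n > r_ee(g_n) one has l*_n = L_n. -/

import Mathlib

open Real Finset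

/-- Transmit-power function `P(r) = (e^r - 1)/g` for channel power gain `g`. -/
noncomputable def P (g r : ℝ) : ℝ := (Real.exp r - 1) / g

/-- Energy-efficiency (energy-per-bit) ratio `ξ(r) = (P(r) + ρ)/r`. -/
noncomputable def xi (g ρ r : ℝ) : ℝ := (P g r + ρ) / r

/-- Scheduling data: `N ≥ 1` epochs of positive lengths, arrival epoch indices
`0 = α_0 < α_1 < ⋯ < α_A = N` with positive arrival amounts `a_0, …, a_{A-1}` and `a_A = 0`,
deadline epoch indices `0 < δ_1 < ⋯ < δ_D = N` with positive demands `d_1, …, d_D`. -/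
def SchedData (N A D : ℕ) (L : ℕ → ℝ) (α : ℕ → ℕ) (a : ℕ → ℝ)
    (δ : ℕ → ℕ) (d : ℕ → ℝ) : Prop :=
  1 ≤ N ∧ (∀ n ∈ Finset.Icc 1 N, 0 < L n) ∧
  α 0 = 0 ∧ α A = N ∧ (∀ i < A, α i < α (i + 1)) ∧
  (∀ i < A, 0 < a i) ∧ a A = 0 ∧
  0 < δ 1 ∧ δ D = N ∧ (∀ j, 1 ≤ j → j < D → δ j < δ (j + 1)) ∧
  (∀ j ∈ Finset.Icc 1 D, 0 < d j)

/-- Feasibility of a schedule `(r, l)`: box constraints, causality constraints and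
deadline constraints. -/
def Feasible (N A D : ℕ) (L : ℕ → ℝ) (α : ℕ → ℕ) (a : ℕ → ℝ)
    (δ : ℕ → ℕ) (d : ℕ → ℝ) (r l : ℕ → ℝ) : Prop :=
  (∀ n ∈ Finset.Icc 1 N, 0 ≤ r n ∧ 0 ≤ l n ∧ l n ≤ L n) ∧
  (∀ i ∈ Finset.Icc 1 A, ∑ n ∈ Finset.Icc 1 (α i), r n * l n ≤ ∑ k ∈ Finset.range i, a k) ∧
  (∀ j ∈ Finset.Icc 1 D, ∑ k ∈ Finset.Icc 1 j, d k ≤ ∑ n ∈ Finset.Icc 1 (δ j), r n * l n)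

/-!
An epoch's contribution to every constraint depends only on its bits `r_n l_n`, so an optimal
schedule cannot be improved by changing `(r_n, l_n)` with `r_n l_n = b` fixed. The epoch energy is
then `ξ(r_n) b`, and `l_n = b / r_n ≤ L_n` only asks `r_n ≥ b / L_n`. Strict convexity of `P` makes
`ξ` strictly increasing on `[r_ee, ∞)`, so `r_n = max (r_ee, b / L_n)`, which is the trichotomy.
-/

open Function Set

lemma strictConvexOn_P_add (ρ : ℝ) {g : ℝ} (hg : 0 < g) :
    StrictConvexOn ℝ univ (fun r => P g r + ρ) := by
  refine ⟨convex_univ, fun x _ y _ hxy a b ha hb hab => ?_⟩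
  have hexp := strictConvexOn_exp.2 (mem_univ x) (mem_univ y) hxy ha hb hab
  simp only [P, smul_eq_mul] at hexp ⊢
  have key : (exp (a * x + b * y) - 1) / g < (a * exp x + b * exp y - 1) / g :=
    div_lt_div_of_pos_right (by linarith) hg
  have hsplit : a * ((exp x - 1) / g + ρ) + b * ((exp y - 1) / g + ρ)
      = (a * exp x + b * exp y - 1) / g + ρ := by
    obtain rfl : b = 1 - a := by linarith
    field_simp; ring
  linarith

theorem StrictConvexOn.strictMonoOn_div_self {f : ℝ → ℝ} (hf : StrictConvexOn ℝ (Ioi 0) f)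
    {m : ℝ} (hm : 0 < m) (hmin : IsMinOn (fun r => f r / r) (Ioi 0) m) :
    StrictMonoOn (fun r => f r / r) (Ici m) := by
  have hbetween : ∀ ⦃z x⦄, m < z → z < x → f z / z < f x / x := by
    intro z x hmz hzx
    have hx : 0 < x := hm.trans (hmz.trans hzx)
    have hmx : f m / m ≤ f x / x := hmin (mem_Ioi.2 hx)
    set t := (x - z) / (x - m)
    have hxm : 0 < x - m := by linarith
    have hz : t * m + (1 - t) * x = z := by simp only [t]; field_simp; ring
    have ht : 0 < t := div_pos (by linarith) hxm
    have ht1 : 0 < 1 - t := by simp only [t]; rw [sub_pos, div_lt_one hxm]; linarith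
    have hconv : f z < t * f m + (1 - t) * f x := by
      have := hf.2 (mem_Ioi.2 hm) (mem_Ioi.2 hx) (hmz.trans hzx).ne ht ht1 (add_sub_cancel t 1)
      rwa [smul_eq_mul, smul_eq_mul, hz] at this
    -- `f m ≤ m ξ(x)` and `f x = x ξ(x)`, so the chord lies below `z ↦ z ξ(x)`.
    have hfm : f m ≤ m * (f x / x) := by rwa [div_le_iff₀ hm, mul_comm] at hmx
    rw [div_lt_iff₀ (hm.trans hmz)]
    calc f z < t * f m + (1 - t) * f x := hconv
      _ ≤ t * (m * (f x / x)) + (1 - t) * (x * (f x / x)) := by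
        rw [mul_div_cancel₀ _ hx.ne']; gcongr
      _ = f x / x * z := by rw [← hz]; ring
  intro y hy x _ hyx
  rcases (mem_Ici.1 hy).eq_or_lt with hmy | hmy
  · rw [← hmy] at hyx ⊢
    calc f m / m ≤ f ((m + x) / 2) / ((m + x) / 2) := hmin (mem_Ioi.2 (by linarith))
      _ < f x / x := hbetween (by linarith) (by linarith)
  · exact hbetween hmy hyx

def IsEpochOptimal (f : ℝ → ℝ) (L r l : ℝ) : Prop :=
  ∀ r' l', 0 ≤ r' → 0 ≤ l' → l' ≤ L → r' * l' = r * l → f r * l ≤ f r' * l'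

namespace IsEpochOptimal

variable {f : ℝ → ℝ} {L r l : ℝ}

lemma rate_pos (h : IsEpochOptimal f L r l) (hf0 : 0 < f 0) (hr : 0 ≤ r) (hl : 0 < l)
    (hlL : l ≤ L) : 0 < r := by
  refine hr.lt_of_ne fun hr0 => ?_
  have := h 0 0 le_rfl le_rfl (hl.le.trans hlL) (by rw [← hr0]; ring)
  rw [← hr0] at this
  nlinarith

lemma div_le_div_of_bits_le (h : IsEpochOptimal f L r l) (hr : 0 < r) (hl : 0 < l) {r' : ℝ}
    (hr' : 0 < r') (hbits : r * l ≤ r' * L) : f r / r ≤ f r' / r' := by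
  have hcost := h r' (r * l / r') hr'.le (by positivity)
    (by rw [div_le_iff₀ hr']; linarith) (by field_simp)
  have hb : 0 < r * l := mul_pos hr hl
  refine le_of_mul_le_mul_right ?_ hb
  calc f r / r * (r * l) = f r * l := by field_simp
    _ ≤ f r' * (r * l / r') := hcost
    _ = f r' / r' * (r * l) := by ring

variable {m : ℝ} (hm : 0 < m) (hmin : ∀ r, 0 < r → r ≠ m → f m / m < f r / r)
include hm hmin

lemma le_rate (h : IsEpochOptimal f L r l) (hr : 0 < r) (hl : 0 < l) (hlL : l ≤ L) :
    m ≤ r := by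
  by_contra! hrm
  have := h.div_le_div_of_bits_le hr hl hm (by nlinarith)
  exact (hmin r hr hrm.ne).not_ge this

lemma length_eq (h : IsEpochOptimal f L r l) (hf : StrictConvexOn ℝ (Ioi 0) f)
    (hr : 0 < r) (hl : 0 < l) (hlL : l ≤ L) (hmr : m < r) : l = L := by
  by_contra hne
  have hL : 0 < L := hl.trans_le hlL
  have hlL' : l < L := hlL.lt_of_ne hne
  set r' := max m (r * l / L)
  have hr'r : r' < r := max_lt hmr (by rw [div_lt_iff₀ hL]; nlinarith)
  have hbits : r * l ≤ r' * L := (div_le_iff₀ hL).1 (le_max_right _ _)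
  have hmono := hf.strictMonoOn_div_self hm <| isMinOn_iff.2 fun x hx =>
    (eq_or_ne x m).elim (fun hxm => hxm ▸ le_rfl) fun hxm => (hmin x hx hxm).le
  exact (hmono (mem_Ici.2 (le_max_left _ _)) (mem_Ici.2 hmr.le) hr'r).not_ge
    (h.div_le_div_of_bits_le hr hl (hm.trans_le (le_max_left _ _)) hbits)

end IsEpochOptimal

section Schedule

variable {N A D : ℕ} {L : ℕ → ℝ} {α : ℕ → ℕ} {a : ℕ → ℝ} {δ : ℕ → ℕ} {d : ℕ → ℝ} {r l : ℕ → ℝ}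

lemma Feasible.update_of_mul_eq (h : Feasible N A D L α a δ d r l) {n : ℕ} {r' l' : ℝ} (hr' : 0 ≤ r')
    (hl' : 0 ≤ l') (hl'L : l' ≤ L n) (hbits : r' * l' = r n * l n) :
    Feasible N A D L α a δ d (update r n r') (update l n l') := by
  have hsame : ∀ m, update r n r' m * update l n l' m = r m * l m := by
    intro m
    rcases eq_or_ne m n with rfl | hmn
    · simpa using hbits
    · simp [hmn]
  refine ⟨fun m hm => ?_, by simpa only [hsame] using h.2.1, by simpa only [hsame] using h.2.2⟩
  rcases eq_or_ne m n with rfl | hmn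
  · simpa using ⟨hr', hl', hl'L⟩
  · simpa [hmn] using h.1 m hm

lemma Feasible.isEpochOptimal (h : Feasible N A D L α a δ d r l) {c : ℕ → ℝ → ℝ}
    (hopt : ∀ r' l', Feasible N A D L α a δ d r' l' →
      ∑ m ∈ Finset.Icc 1 N, c m (r m) * l m ≤ ∑ m ∈ Finset.Icc 1 N, c m (r' m) * l' m)
    {n : ℕ} (hn : n ∈ Finset.Icc 1 N) : IsEpochOptimal (c n) (L n) (r n) (l n) := by
  intro r' l' hr' hl' hl'L hbits
  have hle := hopt _ _ (h.update_of_mul_eq hr' hl' hl'L hbits)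
  have hterm : ∀ m, c m (update r n r' m) * update l n l' m
      = update (fun k => c k (r k) * l k) n (c n r' * l') m :=
    apply_update₂ (fun k x y => c k x * y) r l n r' l'
  simp only [hterm, sum_update_of_mem hn] at hle
  rw [Finset.sum_eq_add_sum_sdiff_singleton_of_mem hn] at hle
  linarith

end Schedule

theorem lemma3_time_varying_general
    (ρ : ℝ) (hρ : 0 < ρ)
    (N A D : ℕ) (g : ℕ → ℝ) (hg : ∀ n ∈ Finset.Icc 1 N, 0 < g n)
    (L : ℕ → ℝ) (α : ℕ → ℕ) (a : ℕ → ℝ) (δ : ℕ → ℕ) (d : ℕ → ℝ)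
    (ree : ℕ → ℝ)
    (hree_pos : ∀ n ∈ Finset.Icc 1 N, 0 < ree n)
    (hree_min : ∀ n ∈ Finset.Icc 1 N, ∀ r : ℝ, 0 < r → r ≠ ree n →
      xi (g n) ρ (ree n) < xi (g n) ρ r)
    (rs ls : ℕ → ℝ)
    (hfeas : Feasible N A D L α a δ d rs ls)
    (hopt : ∀ r l : ℕ → ℝ, Feasible N A D L α a δ d r l →
      ∑ n ∈ Finset.Icc 1 N, (P (g n) (rs n) + ρ) * ls n ≤
        ∑ n ∈ Finset.Icc 1 N, (P (g n) (r n) + ρ) * l n) :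
    ∀ n ∈ Finset.Icc 1 N,
      (ls n = 0 ∨ (rs n = ree n ∧ 0 < ls n ∧ ls n ≤ L n) ∨ (ree n < rs n ∧ ls n = L n)) ∧
      (0 < ls n → ree n ≤ rs n) ∧
      (0 < ls n → ree n < rs n → ls n = L n) := by
  intro n hn
  obtain ⟨hr0, hl, hlL⟩ := hfeas.1 n hn
  rcases hl.eq_or_lt with hl0 | hl
  · exact ⟨Or.inl hl0.symm, fun h => (h.ne hl0).elim, fun h => (h.ne hl0).elim⟩
  have hepoch := hfeas.isEpochOptimal (c := fun m r => P (g m) r + ρ) hopt hn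
  have hf := (strictConvexOn_P_add ρ (hg n hn)).subset (subset_univ _) (convex_Ioi 0)
  have hr : 0 < rs n := hepoch.rate_pos (by simpa [P] using hρ) hr0 hl hlL
  have hge := hepoch.le_rate (hree_pos n hn) (hree_min n hn) hr hl hlL
  have hfull := hepoch.length_eq (hree_pos n hn) (hree_min n hn) hf hr hl hlL
  refine ⟨?_, fun _ => hge, fun _ => hfull⟩
  rcases hge.eq_or_lt with heq | hlt
  · exact Or.inr (Or.inl ⟨heq.symm, hl, hlL⟩)
  · exact Or.inr (Or.inr ⟨hlt, hfull hlt⟩)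

/-- **Lemma 3** (optimal per-epoch structure, time-varying channel).
If `(rs, ls)` globally minimizes the time-varying energy
`Σ_n ((e^{r_n} - 1)/g_n + ρ) l_n` over the feasible schedules, then every epoch uses one
of three strategies: `ls n = 0`; `rs n = r_ee(g n)` with `0 < ls n ≤ L n`; or
`rs n > r_ee(g n)` with `ls n = L n`. Equivalently: whenever `ls n > 0` one has
`rs n ≥ r_ee(g n)`, and whenever moreover `rs n > r_ee(g n)` one has `ls n = L n`. -/
theorem lemma3_time_varying
    (ρ : ℝ) (hρ : 0 < ρ)
    (N A D : ℕ) (g : ℕ → ℝ) (hg : ∀ n ∈ Finset.Icc 1 N, 0 < g n)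
    (L : ℕ → ℝ) (α : ℕ → ℕ) (a : ℕ → ℝ) (δ : ℕ → ℕ) (d : ℕ → ℝ)
    (hdata : SchedData N A D L α a δ d)
    (ree : ℕ → ℝ)
    (hree_pos : ∀ n ∈ Finset.Icc 1 N, 0 < ree n)
    (hree_min : ∀ n ∈ Finset.Icc 1 N, ∀ r : ℝ, 0 < r → r ≠ ree n →
      xi (g n) ρ (ree n) < xi (g n) ρ r)
    (rs ls : ℕ → ℝ)
    (hfeas : Feasible N A D L α a δ d rs ls)
    (hopt : ∀ r l : ℕ → ℝ, Feasible N A D L α a δ d r l →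
      ∑ n ∈ Finset.Icc 1 N, (P (g n) (rs n) + ρ) * ls n ≤
        ∑ n ∈ Finset.Icc 1 N, (P (g n) (r n) + ρ) * l n) :
    ∀ n ∈ Finset.Icc 1 N,
      (ls n = 0 ∨ (rs n = ree n ∧ 0 < ls n ∧ ls n ≤ L n) ∨ (ree n < rs n ∧ ls n = L n)) ∧
      (0 < ls n → ree n ≤ rs n) ∧
      (0 < ls n → ree n < rs n → ls n = L n) :=
  lemma3_time_varying_general ρ hρ N A D g hg L α a δ d ree hree_pos hree_min rs ls hfeas hopt
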